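/- Let g and g' be two independent such random vectors, let R, R' ∈ ℂ^{M×M} be Hermitian positive semidefinite with positive-semidefinite square roots, set h = R^{1/2} g and h' = R'^{1/2} g', and let B ∈ ℂ^{M×M} be arbitrary. Then E[|h'^H B h|²] = tr(B R B^H R'). -/

import Mathlib

/-!
Write `g = G ∘ inl`, `g' = G ∘ inr` and `C = R'^{1/2} B R^{1/2}`, so that `h'ᴴ B h = g'ᴴ C g` and
`|g'ᴴ C g|² = ∑ C_pq conj(C_rs) · (conj(g'_p) g'_r) · (g_q conj(g_s))`.
The two bracketed factors are independent, and by independence, zero mean and unit variance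
each has expectation a Kronecker delta. Only the terms `p = r`, `q = s` survive, leaving
`∑ |C_pq|² = tr(C Cᴴ) = tr(B R Bᴴ R')`.
-/

open MeasureTheory ProbabilityTheory Matrix
open scoped ComplexOrder ComplexConjugate

section Moments

variable {Ω ι : Type*} [MeasurableSpace Ω] {μ : Measure Ω}
  {G : ι → Ω → ℂ}

lemma integral_conj_mul_eq_ite [DecidableEq ι] (hindep : iIndepFun G μ)
    (hL2 : ∀ j, MemLp (G j) 2 μ) (hmean : ∀ j, ∫ ω, G j ω ∂μ = 0)
    (habs2 : ∀ j, ∫ ω, ‖G j ω‖ ^ 2 ∂μ = 1) (i j : ι) :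
    ∫ ω, conj (G i ω) * G j ω ∂μ = if i = j then 1 else 0 := by
  split_ifs with hij
  · subst hij
    simp_rw [Complex.conj_mul', ← Complex.ofReal_pow, integral_complex_ofReal, habs2 i,
      Complex.ofReal_one]
  · have hind : IndepFun (fun ω => conj (G i ω)) (G j) μ :=
      (hindep.indepFun hij).comp Complex.continuous_conj.measurable measurable_id
    rw [hind.integral_fun_mul_eq_mul_integral (hL2 i).1.star (hL2 j).1, integral_conj, hmean,
      map_zero, zero_mul]

lemma ProbabilityTheory.iIndepFun.indepFun_conj_mul_mul_conj (hindep : iIndepFun G μ)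
    (hmeas : ∀ j, AEMeasurable (G j) μ) {i j k l : ι}
    (hik : i ≠ k) (hil : i ≠ l) (hjk : j ≠ k) (hjl : j ≠ l) :
    IndepFun (fun ω => conj (G i ω) * G j ω) (fun ω => G k ω * conj (G l ω)) μ :=
  (hindep.indepFun_prodMk_prodMk₀ hmeas i j k l hik hil hjk hjl).comp
    ((Complex.continuous_conj.comp continuous_fst).mul continuous_snd).measurable
    (continuous_fst.mul (Complex.continuous_conj.comp continuous_snd)).measurable

lemma integrable_conj_mul_mul_mul_conj (hindep : iIndepFun G μ)
    (hL2 : ∀ j, MemLp (G j) 2 μ) {i j k l : ι}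
    (hik : i ≠ k) (hil : i ≠ l) (hjk : j ≠ k) (hjl : j ≠ l) :
    Integrable (fun ω => conj (G i ω) * G j ω * (G k ω * conj (G l ω))) μ :=
  (hindep.indepFun_conj_mul_mul_conj (fun j => (hL2 j).1.aemeasurable) hik hil hjk hjl
    ).integrable_mul ((hL2 i).star.integrable_mul (hL2 j)) ((hL2 k).integrable_mul (hL2 l).star)

lemma integral_conj_mul_mul_mul_conj [DecidableEq ι] (hindep : iIndepFun G μ)
    (hL2 : ∀ j, MemLp (G j) 2 μ) (hmean : ∀ j, ∫ ω, G j ω ∂μ = 0)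
    (habs2 : ∀ j, ∫ ω, ‖G j ω‖ ^ 2 ∂μ = 1) {i j k l : ι}
    (hik : i ≠ k) (hil : i ≠ l) (hjk : j ≠ k) (hjl : j ≠ l) :
    ∫ ω, conj (G i ω) * G j ω * (G k ω * conj (G l ω)) ∂μ =
      (if i = j then 1 else 0) * (if l = k then 1 else 0) := by
  rw [(hindep.indepFun_conj_mul_mul_conj (fun j => (hL2 j).1.aemeasurable) hik hil hjk hjl
      ).integral_fun_mul_eq_mul_integral (((hL2 i).1.star).mul (hL2 j).1)
      ((hL2 k).1.mul (hL2 l).1.star)]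
  simp only [mul_comm (G k _)]
  rw [integral_conj_mul_eq_ite hindep hL2 hmean habs2,
    integral_conj_mul_eq_ite hindep hL2 hmean habs2]

end Moments

section Algebra

variable {ι κ : Type*} [Fintype ι] [Fintype κ]

lemma dotProduct_mulVec_mul_conj (C : Matrix κ ι ℂ) (x : ι → ℂ) (y : κ → ℂ) :
    (star y ⬝ᵥ C *ᵥ x) * conj (star y ⬝ᵥ C *ᵥ x) =
      ∑ p, ∑ r, ∑ q, ∑ s, C p q * conj (C r s) * (conj (y p) * y r * (x q * conj (x s))) := by
  simp only [dotProduct, mulVec, map_sum, map_mul, Finset.sum_mul, Finset.mul_sum, Pi.star_apply,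
    RCLike.star_def, Complex.conj_conj]
  conv_rhs => rw [Finset.sum_comm]
  refine Finset.sum_congr rfl fun r _ => ?_
  rw [Finset.sum_comm]
  refine Finset.sum_congr rfl fun p _ => ?_
  rw [Finset.sum_comm]
  exact Finset.sum_congr rfl fun q _ => Finset.sum_congr rfl fun s _ => by ring

lemma star_mulVec_dotProduct_mulVec_mulVec {m n : Type*} [Fintype m] [Fintype n]
    (A : Matrix m κ ℂ) (B : Matrix m n ℂ) (D : Matrix n ι ℂ) (x : ι → ℂ) (y : κ → ℂ) :
    star (A *ᵥ y) ⬝ᵥ B *ᵥ (D *ᵥ x) = star y ⬝ᵥ (Aᴴ * B * D) *ᵥ x := by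
  rw [star_mulVec, mulVec_mulVec, dotProduct_mulVec, vecMul_vecMul, ← dotProduct_mulVec,
    Matrix.mul_assoc]

lemma trace_mul_conjTranspose_sandwich {n : Type*} [Fintype n] (A B D : Matrix n n ℂ)
    (hA : A.IsHermitian) (hD : D.IsHermitian) :
    (A * B * D * (A * B * D)ᴴ).trace = (B * (D * D) * Bᴴ * (A * A)).trace := by
  rw [conjTranspose_mul, conjTranspose_mul, hA.eq, hD.eq]
  simp only [Matrix.mul_assoc]
  rw [trace_mul_comm A]
  simp only [Matrix.mul_assoc]

lemma trace_mul_conjTranspose_eq_sum (C : Matrix κ ι ℂ) :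
    (C * Cᴴ).trace = ∑ p, ∑ q, C p q * conj (C p q) := by
  simp [trace, mul_apply, RCLike.star_def]

end Algebra

theorem integral_norm_sq_star_dotProduct_mulVec {Ω ι κ : Type*} [MeasurableSpace Ω]
    {μ : Measure Ω} [Fintype ι] [Fintype κ] [DecidableEq ι] [DecidableEq κ]
    {G : ι ⊕ κ → Ω → ℂ} (hindep : iIndepFun G μ)
    (hL2 : ∀ j, MemLp (G j) 2 μ) (hmean : ∀ j, ∫ ω, G j ω ∂μ = 0)
    (habs2 : ∀ j, ∫ ω, ‖G j ω‖ ^ 2 ∂μ = 1) (C : Matrix κ ι ℂ) :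
    ((∫ ω, ‖star (fun p => G (.inr p) ω) ⬝ᵥ C *ᵥ (fun q => G (.inl q) ω)‖ ^ 2 ∂μ : ℝ) : ℂ) =
      (C * Cᴴ).trace := by
  have hint : ∀ p r q s, Integrable (fun ω => C p q * conj (C r s) *
      (conj (G (.inr p) ω) * G (.inr r) ω * (G (.inl q) ω * conj (G (.inl s) ω)))) μ :=
    fun p r q s => (integrable_conj_mul_mul_mul_conj hindep hL2 (by simp) (by simp) (by simp)
      (by simp)).const_mul _
  calc _ = ∫ ω, ∑ p, ∑ r, ∑ q, ∑ s, C p q * conj (C r s) *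
          (conj (G (.inr p) ω) * G (.inr r) ω * (G (.inl q) ω * conj (G (.inl s) ω))) ∂μ := by
        simp_rw [← integral_complex_ofReal, Complex.ofReal_pow, ← Complex.mul_conj',
          dotProduct_mulVec_mul_conj]
    _ = ∑ p, ∑ r, ∑ q, ∑ s, C p q * conj (C r s) *
          ((if p = r then 1 else 0) * (if s = q then 1 else 0)) := by
        simp (disch := intros; fun_prop (disch := exact hint ..)) only [integral_finsetSum]
        simp (disch := simp) only [integral_const_mul,
          integral_conj_mul_mul_mul_conj hindep hL2 hmean habs2, Sum.inl.injEq, Sum.inr.injEq]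
    _ = (C * Cᴴ).trace := by
        simp [trace_mul_conjTranspose_eq_sum]

theorem cn_cross_quadratic_form_second_moment_general
    {Ω : Type*} [MeasurableSpace Ω] (μ : Measure Ω) [IsProbabilityMeasure μ]
    (M : ℕ) (G : (Fin M ⊕ Fin M) → Ω → ℂ)
    (hindep : iIndepFun G μ)
    (hL4 : ∀ j, MemLp (G j) 4 μ)
    (hmean : ∀ j, ∫ ω, G j ω ∂μ = 0)
    (habs2 : ∀ j, ∫ ω, ‖G j ω‖ ^ 2 ∂μ = 1)
    (R R' Rsqrt R'sqrt : Matrix (Fin M) (Fin M) ℂ)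
    (hRsqrt : Rsqrt.PosSemidef) (hR'sqrt : R'sqrt.PosSemidef)
    (hRsq : Rsqrt * Rsqrt = R) (hR'sq : R'sqrt * R'sqrt = R')
    (B : Matrix (Fin M) (Fin M) ℂ)
    (h h' : Ω → Fin M → ℂ)
    (hh : ∀ ω, h ω = Rsqrt.mulVec (fun m => G (Sum.inl m) ω))
    (hh' : ∀ ω, h' ω = R'sqrt.mulVec (fun m => G (Sum.inr m) ω)) :
    ((∫ ω, ‖star (h' ω) ⬝ᵥ B.mulVec (h ω)‖ ^ 2 ∂μ : ℝ) : ℂ) =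
      (B * R * Bᴴ * R').trace := by
  have hform : ∀ ω, star (h' ω) ⬝ᵥ B *ᵥ h ω =
      star (fun p => G (.inr p) ω) ⬝ᵥ (R'sqrt * B * Rsqrt) *ᵥ (fun q => G (.inl q) ω) :=
    fun ω => by rw [hh ω, hh' ω, star_mulVec_dotProduct_mulVec_mulVec, hR'sqrt.1.eq]
  have hL2 : ∀ j, MemLp (G j) 2 μ := fun j => (hL4 j).mono_exponent (by norm_num)
  simp_rw [hform]
  rw [integral_norm_sq_star_dotProduct_mulVec hindep hL2 hmean habs2,
    trace_mul_conjTranspose_sandwich _ _ _ hR'sqrt.1 hRsqrt.1, hRsq, hR'sq]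

/-- Let `G` be a family of `2M` mutually independent complex
random variables with the `CN(0,1)` moment conditions, giving two independent
vectors `g = G ∘ inl` and `g' = G ∘ inr`. Let `h = R^{1/2} g` and
`h' = R'^{1/2} g'` with `R, R'` Hermitian PSD. For any matrix `B`,
`E[|h'ᴴ B h|²] = tr(B R Bᴴ R')`. -/
theorem cn_cross_quadratic_form_second_moment
    {Ω : Type*} [MeasurableSpace Ω] (μ : Measure Ω) [IsProbabilityMeasure μ]
    (M : ℕ) (G : (Fin M ⊕ Fin M) → Ω → ℂ)
    (hmeas : ∀ j, Measurable (G j))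
    (hindep : iIndepFun G μ)
    (hL4 : ∀ j, MemLp (G j) 4 μ)
    (hmean : ∀ j, ∫ ω, G j ω ∂μ = 0)
    (hsq : ∀ j, ∫ ω, (G j ω) ^ 2 ∂μ = 0)
    (habs2 : ∀ j, ∫ ω, ‖G j ω‖ ^ 2 ∂μ = 1)
    (habs4 : ∀ j, ∫ ω, ‖G j ω‖ ^ 4 ∂μ = 2)
    (R R' Rsqrt R'sqrt : Matrix (Fin M) (Fin M) ℂ)
    (hR : R.PosSemidef) (hR' : R'.PosSemidef)
    (hRsqrt : Rsqrt.PosSemidef) (hR'sqrt : R'sqrt.PosSemidef)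
    (hRsq : Rsqrt * Rsqrt = R) (hR'sq : R'sqrt * R'sqrt = R')
    (B : Matrix (Fin M) (Fin M) ℂ)
    (h h' : Ω → Fin M → ℂ)
    (hh : ∀ ω, h ω = Rsqrt.mulVec (fun m => G (Sum.inl m) ω))
    (hh' : ∀ ω, h' ω = R'sqrt.mulVec (fun m => G (Sum.inr m) ω)) :
    ((∫ ω, ‖star (h' ω) ⬝ᵥ B.mulVec (h ω)‖ ^ 2 ∂μ : ℝ) : ℂ) =
      (B * R * Bᴴ * R').trace :=
  cn_cross_quadratic_form_second_moment_general μ M G hindep hL4 hmean habs2 R R' Rsqrt R'sqrt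
    hRsqrt hR'sqrt hRsq hR'sq B h h' hh hh'
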